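/- Let R be a right and left Ore ring with classical quotient ring Q = R[S^{-1}] = [S^{-1}]R (S the set of regular elements of R), suppose the finitistic dimension of Q as a right Q-module is 0, and assume every right R-module of weak dimension ≤ 1 has projective dimension ≤ 1. Then the class Q^⊥ = {M : Ext^1_R(Q, M) = 0} of Matlis-cotorsion right R-modules is closed under homomorphic images. -/

import Mathlib

open MulOpposite

universe u

/-- `φ : R →+* Q` is an epimorphism in the category of rings. -/
def IsRingEpi {R Q : Type u} [Ring R] [Ring Q] (φ : R →+* Q) : Prop :=
  ∀ (T : Type u) [Ring T] (ψ ω : Q →+* T), ψ.comp φ = ω.comp φ → ψ = ω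

section NCTensor

variable (R : Type u) [Ring R] (M : Type u) [AddCommGroup M] [Module Rᵐᵒᵖ M]
  (N : Type u) [AddCommGroup N] [Module R N]

/-- Relations defining the tensor product `M ⊗_R N` of a right `R`-module `M`
and a left `R`-module `N` over a (possibly noncommutative) ring `R`. -/
def ncRels : AddSubgroup (FreeAbelianGroup (M × N)) :=
  AddSubgroup.closure
    ({x | ∃ m m' n, x = FreeAbelianGroup.of (m + m', n) - FreeAbelianGroup.of (m, n) -
        FreeAbelianGroup.of (m', n)} ∪
     {x | ∃ m n n', x = FreeAbelianGroup.of (m, n + n') - FreeAbelianGroup.of (m, n) -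
        FreeAbelianGroup.of (m, n')} ∪
     {x | ∃ (r : R) (m : M) (n : N), x = FreeAbelianGroup.of (op r • m, n) -
        FreeAbelianGroup.of (m, r • n)})

/-- The tensor product `M ⊗_R N` of a right `R`-module and a left `R`-module over a
(possibly noncommutative) ring `R`, as an abelian group. -/
def NCTensor : Type u := FreeAbelianGroup (M × N) ⧸ ncRels R M N

instance : AddCommGroup (NCTensor R M N) :=
  QuotientAddGroup.Quotient.addCommGroup _

/-- The pure tensor `m ⊗ n` in `M ⊗_R N`. -/
def NCTensor.tmul (m : M) (n : N) : NCTensor R M N :=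
  QuotientAddGroup.mk (FreeAbelianGroup.of (m, n))

end NCTensor

/-- A right `R`-module `M` is flat if tensoring left `R`-modules with `M`
preserves injectivity. -/
def IsFlatRightModule (R : Type u) [Ring R] (M : Type u) [AddCommGroup M]
    [Module Rᵐᵒᵖ M] : Prop :=
  ∀ (A B : Type u) [AddCommGroup A] [AddCommGroup B] [Module R A] [Module R B]
    (i : A →ₗ[R] B), Function.Injective i →
    ∀ g : NCTensor R M A →+ NCTensor R M B,
      (∀ m a, g (NCTensor.tmul R M A m a) = NCTensor.tmul R M B m (i a)) →
      Function.Injective g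

/-- A right `R`-module `I` has weak (flat) dimension at most 1: there is a short exact
sequence `0 → F₁ → F₀ → I → 0` with `F₁` and `F₀` flat. -/
def RFlatDimLE1 (R : Type u) [Ring R] (I : Type u) [AddCommGroup I] [Module Rᵐᵒᵖ I] : Prop :=
  ∃ (F1 : Type u) (a1 : AddCommGroup F1), letI := a1; ∃ (m1 : Module Rᵐᵒᵖ F1), letI := m1;
  ∃ (F0 : Type u) (a0 : AddCommGroup F0), letI := a0; ∃ (m0 : Module Rᵐᵒᵖ F0), letI := m0;
  ∃ (i : F1 →ₗ[Rᵐᵒᵖ] F0) (p : F0 →ₗ[Rᵐᵒᵖ] I),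
    IsFlatRightModule R F1 ∧ IsFlatRightModule R F0 ∧
    Function.Injective i ∧ Function.Surjective p ∧ LinearMap.range i = LinearMap.ker p

open CategoryTheory in
/-- The Ext group `Ext^n_A(M, N)` for modules over an arbitrary ring `A`,
computed in the abelian category of `A`-modules. -/
noncomputable abbrev extGroup (A : Type u) [Ring A] (n : ℕ) (M : Type u) [AddCommGroup M]
    [Module A M] (N : Type u) [AddCommGroup N] [Module A N] : Type u :=
  ((Ext ℤ (ModuleCat.{u} A) n).obj (Opposite.op (ModuleCat.of A M))).obj (ModuleCat.of A N)

/-- An element `s` of a ring `R` is regular if it is neither a left nor a right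
zero-divisor. -/
def RegElem (R : Type u) [Ring R] (s : R) : Prop :=
  (∀ a : R, s * a = 0 → a = 0) ∧ (∀ a : R, a * s = 0 → a = 0)

/-!
`Q` is flat as a right `R`-module: every element of `Q ⊗_R B` is `s⁻¹ ⊗ b` for one regular `s`,
and it maps to `b /ₒ s` in the Ore localization `B[S⁻¹]`. That vanishes only if `c • b = 0` for
some `c` with `c * s` regular; for `b = i a` with `i` injective also `c • a = 0`, whence
`s⁻¹ ⊗ a = (c * s)⁻¹ ⊗ c • a = 0`. Hence `Q` has weak dimension `≤ 1`, so by hypothesis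
`Ext²_R(Q, -) = 0`, and the long exact sequence of `0 → N → M → M/N → 0` gives
`0 = Ext¹_R(Q, M) → Ext¹_R(Q, M/N) → Ext²_R(Q, N) = 0`.
-/

open nonZeroDivisors

namespace NCTensor

variable {R : Type u} [Ring R] {M : Type u} [AddCommGroup M] [Module Rᵐᵒᵖ M]
  {N : Type u} [AddCommGroup N] [Module R N]

lemma tmul_add_right (m : M) (n n' : N) :
    tmul R M N m (n + n') = tmul R M N m n + tmul R M N m n' :=
  (QuotientAddGroup.eq_iff_sub_mem).2 <| AddSubgroup.subset_closure <|
    .inl <| .inr ⟨m, n, n', by rw [sub_add_eq_sub_sub]⟩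

lemma tmul_op_smul (r : R) (m : M) (n : N) :
    tmul R M N (op r • m) n = tmul R M N m (r • n) :=
  (QuotientAddGroup.eq_iff_sub_mem).2 <| AddSubgroup.subset_closure <| .inr ⟨r, m, n, rfl⟩

@[simp]
lemma tmul_zero_right (m : M) : tmul R M N m 0 = 0 := by
  simpa using tmul_add_right (R := R) m (0 : N) 0

@[simp]
lemma tmul_zero_left (n : N) : tmul R M N 0 n = 0 := by
  simpa using tmul_op_smul (R := R) 0 (0 : M) n

lemma tmul_neg_right (m : M) (n : N) : tmul R M N m (-n) = -tmul R M N m n :=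
  eq_neg_of_add_eq_zero_left <| by rw [← tmul_add_right, neg_add_cancel, tmul_zero_right]

@[elab_as_elim]
lemma induction_on {P : NCTensor R M N → Prop} (x : NCTensor R M N) (zero : P 0)
    (tmul : ∀ m n, P (tmul R M N m n)) (neg : ∀ y, P y → P (-y))
    (add : ∀ y z, P y → P z → P (y + z)) : P x := by
  obtain ⟨z, rfl⟩ := QuotientAddGroup.mk_surjective x
  induction z using FreeAbelianGroup.induction_on with
  | zero => exact zero
  | of p => exact tmul p.1 p.2
  | neg p _ => exact neg _ (tmul p.1 p.2)
  | add y z hy hz => exact add _ _ hy hz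

lemma eq_zero_of_subsingleton [Subsingleton M] (x : NCTensor R M N) : x = 0 := by
  induction x using induction_on with
  | zero => rfl
  | tmul m n => rw [Subsingleton.elim m 0, tmul_zero_left]
  | neg y hy => rw [hy, neg_zero]
  | add y z hy hz => rw [hy, hz, add_zero]

variable {G : Type*} [AddCommGroup G]

def lift (f : M → N → G) (add_left : ∀ m m' n, f (m + m') n = f m n + f m' n)
    (add_right : ∀ m n n', f m (n + n') = f m n + f m n')
    (balanced : ∀ (r : R) m n, f (op r • m) n = f m (r • n)) : NCTensor R M N →+ G :=
  QuotientAddGroup.lift _ (FreeAbelianGroup.lift fun p => f p.1 p.2) <| by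
    refine (AddSubgroup.closure_le _).2 ?_
    rintro _ ((⟨m, m', n, rfl⟩ | ⟨m, n, n', rfl⟩) | ⟨r, m, n, rfl⟩) <;>
      simp [add_left, add_right, balanced]

@[simp]
lemma lift_tmul (f : M → N → G) (add_left add_right balanced) (m : M) (n : N) :
    lift f add_left add_right balanced (tmul R M N m n) = f m n :=
  FreeAbelianGroup.lift_apply_of _ _

end NCTensor

lemma isFlatRightModule_of_subsingleton (R : Type u) [Ring R] (M : Type u) [AddCommGroup M]
    [Module Rᵐᵒᵖ M] [Subsingleton M] : IsFlatRightModule R M :=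
  fun _ _ _ _ _ _ _ _ _ _ x y _ => by
    rw [NCTensor.eq_zero_of_subsingleton x, NCTensor.eq_zero_of_subsingleton y]

lemma rFlatDimLE1_of_isFlatRightModule {R : Type u} [Ring R] {M : Type u} [AddCommGroup M]
    [Module Rᵐᵒᵖ M] (hM : IsFlatRightModule R M) : RFlatDimLE1 R M :=
  ⟨PUnit, inferInstance, inferInstance, M, inferInstance, inferInstance, 0, LinearMap.id,
    isFlatRightModule_of_subsingleton R PUnit, hM, Function.injective_of_subsingleton _,
    Function.surjective_id, by rw [LinearMap.range_zero, LinearMap.ker_id]⟩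

lemma OreLocalization.exists_mul_mem_smul_eq_zero {R X : Type*} [Ring R] {S : Submonoid R}
    [OreLocalization.OreSet S] [AddCommGroup X] [Module R X] {x : X} {s : S}
    (h : x /ₒ s = 0) : ∃ c : R, c * s ∈ S ∧ c • x = 0 := by
  rw [OreLocalization.zero_def, OreLocalization.oreDiv_eq_iff] at h
  obtain ⟨u, c, hu, hc⟩ := h
  exact ⟨c, by simp [← hc], by rw [← hu, smul_zero]⟩

/-- `Q = [S⁻¹]R` for `S = R⁰` the regular elements of `R`. -/
structure IsClassicalLeftQuotientRing {R Q : Type u} [Ring R] [Ring Q] (φ : R →+* Q) :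
    Prop where
  injective : Function.Injective φ
  isUnit : ∀ s ∈ R⁰, IsUnit (φ s)
  exists_mul_eq : ∀ q, ∃ r, ∃ s ∈ R⁰, φ s * q = φ r

namespace IsClassicalLeftQuotientRing

variable {R Q : Type u} [Ring R] [Ring Q] {φ : R →+* Q}

lemma inverse_mul_cancel (hφ : IsClassicalLeftQuotientRing φ) {s : R} (hs : s ∈ R⁰) :
    Ring.inverse (φ s) * φ s = 1 :=
  Ring.inverse_mul_cancel _ (hφ.isUnit s hs)

lemma inverse_eq_inverse_mul (hφ : IsClassicalLeftQuotientRing φ) {u c : R} (hu : u ∈ R⁰)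
    (hcu : c * u ∈ R⁰) : Ring.inverse (φ u) = Ring.inverse (φ (c * u)) * φ c :=
  ((hφ.isUnit u hu).mul_left_inj).1 <| by
    rw [mul_assoc, ← map_mul, hφ.inverse_mul_cancel hu, hφ.inverse_mul_cancel hcu]

lemma ore_condition (hφ : IsClassicalLeftQuotientRing φ) (r : R) (s : R⁰) :
    ∃ (r' : R) (s' : R⁰), s' * r = r' * s := by
  obtain ⟨r', s', hs', h⟩ := hφ.exists_mul_eq (φ r * Ring.inverse (φ s))
  refine ⟨r', ⟨s', hs'⟩, hφ.injective ?_⟩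
  rw [map_mul, map_mul, ← h, mul_assoc, mul_assoc, hφ.inverse_mul_cancel s.2, mul_one]

lemma nonempty_oreSet (hφ : IsClassicalLeftQuotientRing φ) :
    Nonempty (OreLocalization.OreSet R⁰) :=
  OreLocalization.nonempty_oreSet_iff.2
    ⟨fun r₁ r₂ s h => ⟨1, by
      simpa [sub_eq_zero] using s.2.2 (r₁ - r₂) (by rw [sub_mul, h, sub_self])⟩,
    hφ.ore_condition⟩

section OreLocalization

variable [OreLocalization.OreSet R⁰]

noncomputable def fromOreLocalization (hφ : IsClassicalLeftQuotientRing φ) :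
    OreLocalization R⁰ R →+* Q :=
  OreLocalization.universalHom φ
    (IsUnit.liftRight ((φ : R →* Q).comp R⁰.subtype) fun s => hφ.isUnit s s.2)
    fun s => (IsUnit.coe_liftRight ((φ : R →* Q).comp R⁰.subtype) _ s).symm

lemma fromOreLocalization_oreDiv (hφ : IsClassicalLeftQuotientRing φ) (r : R) (s : R⁰) :
    hφ.fromOreLocalization (r /ₒ s) = Ring.inverse (φ s) * φ r :=
  (congrArg (· * φ r) (Ring.inverse_unit _)).symm

lemma fromOreLocalization_bijective (hφ : IsClassicalLeftQuotientRing φ) :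
    Function.Bijective hφ.fromOreLocalization := by
  refine ⟨(injective_iff_map_eq_zero _).2 fun x hx => ?_, fun q => ?_⟩
  · induction x with | _ r s
    rw [fromOreLocalization_oreDiv] at hx
    have hr : φ r = 0 := by
      rw [← one_mul (φ r), ← Ring.mul_inverse_cancel _ (hφ.isUnit s s.2), mul_assoc, hx,
        mul_zero]
    rw [hφ.injective (hr.trans (map_zero φ).symm), OreLocalization.zero_oreDiv]
  · obtain ⟨r, s, hs, h⟩ := hφ.exists_mul_eq q
    refine ⟨r /ₒ ⟨s, hs⟩, ?_⟩
    rw [fromOreLocalization_oreDiv, ← h, ← mul_assoc, hφ.inverse_mul_cancel hs, one_mul]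

noncomputable def oreLocalizationEquiv (hφ : IsClassicalLeftQuotientRing φ) :
    OreLocalization R⁰ R ≃+* Q :=
  RingEquiv.ofBijective _ hφ.fromOreLocalization_bijective

lemma oreLocalizationEquiv_symm_apply_map (hφ : IsClassicalLeftQuotientRing φ) (r : R) :
    hφ.oreLocalizationEquiv.symm (φ r) = r /ₒ 1 :=
  hφ.oreLocalizationEquiv.symm_apply_eq.2 <| by
    simp [oreLocalizationEquiv, fromOreLocalization_oreDiv]

lemma oreLocalizationEquiv_symm_apply_inverse (hφ : IsClassicalLeftQuotientRing φ) (s : R⁰) :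
    hφ.oreLocalizationEquiv.symm (Ring.inverse (φ s)) = 1 /ₒ s :=
  hφ.oreLocalizationEquiv.symm_apply_eq.2 <| by
    simp [oreLocalizationEquiv, fromOreLocalization_oreDiv]

noncomputable def tensorToOreLocalization [Module Rᵐᵒᵖ Q] (hφ : IsClassicalLeftQuotientRing φ)
    (hr : ∀ (r : R) (q : Q), op r • q = q * φ r) (B : Type u) [AddCommGroup B] [Module R B] :
    NCTensor R Q B →+ OreLocalization R⁰ B :=
  NCTensor.lift (fun q b => hφ.oreLocalizationEquiv.symm q • (b /ₒ (1 : R⁰)))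
    (fun _ _ _ => by rw [map_add, add_smul])
    (fun _ _ _ => by rw [← OreLocalization.add_oreDiv, smul_add])
    (fun r q b => by
      rw [hr, map_mul, oreLocalizationEquiv_symm_apply_map, mul_smul,
        OreLocalization.smul_div_one])

lemma tensorToOreLocalization_tmul_inverse [Module Rᵐᵒᵖ Q]
    (hφ : IsClassicalLeftQuotientRing φ) (hr : ∀ (r : R) (q : Q), op r • q = q * φ r)
    {B : Type u} [AddCommGroup B] [Module R B] (u : R⁰) (b : B) :
    hφ.tensorToOreLocalization hr B (NCTensor.tmul R Q B (Ring.inverse (φ u)) b) = b /ₒ u := by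
  rw [tensorToOreLocalization, NCTensor.lift_tmul, oreLocalizationEquiv_symm_apply_inverse,
    OreLocalization.smul_div_one, one_smul]

end OreLocalization

variable [Module Rᵐᵒᵖ Q]

lemma exists_eq_tmul_inverse (hφ : IsClassicalLeftQuotientRing φ)
    (hr : ∀ (r : R) (q : Q), op r • q = q * φ r) {A : Type u} [AddCommGroup A] [Module R A]
    (x : NCTensor R Q A) : ∃ u ∈ R⁰, ∃ a, x = NCTensor.tmul R Q A (Ring.inverse (φ u)) a := by
  induction x using NCTensor.induction_on with
  | zero => exact ⟨1, one_mem _, 0, (NCTensor.tmul_zero_right _).symm⟩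
  | tmul q a =>
    obtain ⟨r, s, hs, h⟩ := hφ.exists_mul_eq q
    refine ⟨s, hs, r • a, ?_⟩
    rw [← NCTensor.tmul_op_smul, hr, ← h, ← mul_assoc, hφ.inverse_mul_cancel hs, one_mul]
  | neg y hy =>
    obtain ⟨u, hu, a, rfl⟩ := hy
    exact ⟨u, hu, -a, (NCTensor.tmul_neg_right _ _).symm⟩
  | add y z hy hz =>
    obtain ⟨u, hu, a, rfl⟩ := hy
    obtain ⟨v, hv, b, rfl⟩ := hz
    -- bring both fractions to the common denominator `w * u = t * v`
    obtain ⟨t, ⟨w, hw⟩, hwt : w * u = t * v⟩ := hφ.ore_condition u ⟨v, hv⟩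
    have hwu : w * u ∈ R⁰ := mul_mem hw hu
    refine ⟨w * u, hwu, w • a + t • b, ?_⟩
    rw [hφ.inverse_eq_inverse_mul hu hwu, hφ.inverse_eq_inverse_mul hv (hwt ▸ hwu), ← hwt, ← hr,
      ← hr, NCTensor.tmul_op_smul, NCTensor.tmul_op_smul, NCTensor.tmul_add_right]

lemma tmul_inverse_eq_zero (hφ : IsClassicalLeftQuotientRing φ)
    (hr : ∀ (r : R) (q : Q), op r • q = q * φ r) {A : Type u} [AddCommGroup A] [Module R A]
    {u c : R} (hu : u ∈ R⁰) (hcu : c * u ∈ R⁰) {a : A} (ha : c • a = 0) :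
    NCTensor.tmul R Q A (Ring.inverse (φ u)) a = 0 := by
  rw [hφ.inverse_eq_inverse_mul hu hcu, ← hr, NCTensor.tmul_op_smul, ha,
    NCTensor.tmul_zero_right]

theorem isFlatRightModule (hφ : IsClassicalLeftQuotientRing φ)
    (hr : ∀ (r : R) (q : Q), op r • q = q * φ r) : IsFlatRightModule R Q := by
  obtain ⟨_⟩ := hφ.nonempty_oreSet
  intro A B _ _ _ _ i hi g hg
  refine (injective_iff_map_eq_zero g).2 fun x hx => ?_
  obtain ⟨u, hu, a, rfl⟩ := hφ.exists_eq_tmul_inverse hr x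
  have h : i a /ₒ (⟨u, hu⟩ : R⁰) = 0 := by
    rw [← hφ.tensorToOreLocalization_tmul_inverse hr, ← hg, hx, map_zero]
  obtain ⟨c, hcu, hc⟩ := OreLocalization.exists_mul_mem_smul_eq_zero h
  exact hφ.tmul_inverse_eq_zero hr hu hcu (hi (by rw [map_smul, hc, map_zero]))

end IsClassicalLeftQuotientRing

open CategoryTheory Limits

/-- `H¹ Hom(K, X₂) = 0` and `H² Hom(K, X₁) = 0` force `H¹ Hom(K, X₃) = 0`. -/
lemma CategoryTheory.ShortComplex.ShortExact.exists_d_comp_eq_X₃ {C : Type*} [Category C]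
    [Abelian C] {S : ShortComplex C} (hS : S.ShortExact) (K : ChainComplex C ℕ) [Projective (K.X 1)]
    (h₂ : ∀ f : K.X 1 ⟶ S.X₂, K.d 2 1 ≫ f = 0 → ∃ g : K.X 0 ⟶ S.X₂, K.d 1 0 ≫ g = f)
    (h₁ : ∀ f : K.X 2 ⟶ S.X₁, K.d 3 2 ≫ f = 0 → ∃ g : K.X 1 ⟶ S.X₁, K.d 2 1 ≫ g = f)
    (f : K.X 1 ⟶ S.X₃) (hf : K.d 2 1 ≫ f = 0) : ∃ g : K.X 0 ⟶ S.X₃, K.d 1 0 ≫ g = f := by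
  have := hS.epi_g
  have := hS.mono_f
  let f' := Projective.factorThru f S.g
  have hf' : f' ≫ S.g = f := Projective.factorThru_comp f S.g
  let k := hS.exact.lift (K.d 2 1 ≫ f') (by rw [Category.assoc, hf', hf])
  have hk : k ≫ S.f = K.d 2 1 ≫ f' := hS.exact.lift_f _ _
  obtain ⟨h, hh⟩ := h₁ k <| by
    rw [← cancel_mono S.f, Category.assoc, hk, ← Category.assoc, K.d_comp_d, zero_comp,
      zero_comp]
  obtain ⟨g, hg⟩ := h₂ (f' - h ≫ S.f) <| by
    rw [Preadditive.comp_sub, ← Category.assoc, hh, hk, sub_self]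
  refine ⟨g ≫ S.g, ?_⟩
  rw [← Category.assoc, hg, Preadditive.sub_comp, Category.assoc, S.zero, comp_zero, sub_zero,
    hf']

lemma subsingleton_extGroup_succ_iff {A : Type u} [Ring A] {X : Type u} [AddCommGroup X]
    [Module A X] (P : ProjectiveResolution (ModuleCat.of A X)) (n : ℕ) (Y : Type u)
    [AddCommGroup Y] [Module A Y] :
    Subsingleton (extGroup A (n + 1) X Y) ↔
      ∀ f : P.complex.X (n + 1) ⟶ ModuleCat.of A Y, P.complex.d (n + 2) (n + 1) ≫ f = 0 →
        ∃ g : P.complex.X n ⟶ ModuleCat.of A Y, P.complex.d (n + 1) n ≫ g = f := by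
  rw [← ModuleCat.isZero_iff_subsingleton, (P.isoExt (n + 1) _).isZero_iff,
    ← HomologicalComplex.exactAt_iff_isZero_homology,
    HomologicalComplex.exactAt_iff' _ n (n + 1) (n + 2) (by simp) (by simp),
    ShortComplex.moduleCat_exact_iff]
  rfl

lemma subsingleton_extGroup_one_quotient {A : Type u} [Ring A] {X M : Type u} [AddCommGroup X]
    [Module A X] [AddCommGroup M] [Module A M] {N : Submodule A M}
    (hM : Subsingleton (extGroup A 1 X M)) (hN : Subsingleton (extGroup A 2 X N)) :
    Subsingleton (extGroup A 1 X (M ⧸ N)) := by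
  obtain ⟨P⟩ : Nonempty (ProjectiveResolution (ModuleCat.of A X)) := HasProjectiveResolution.out
  have hS := ModuleCat.shortComplex_shortExact
    (ModuleCat.shortComplexOfCompEqZero N.subtype N.mkQ
      (LinearMap.exact_subtype_mkQ N).linearMap_comp_eq_zero)
    (LinearMap.exact_subtype_mkQ N) N.injective_subtype N.mkQ_surjective
  rw [subsingleton_extGroup_succ_iff P] at hM hN ⊢
  exact hS.exists_d_comp_eq_X₃ P.complex hM hN

theorem matlisCotorsion_closed_under_quotients_general {R Q : Type u} [Ring R] [Ring Q]
    (φ : R →+* Q) (hinj : Function.Injective φ)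
    (hunit : ∀ s : R, RegElem R s → IsUnit (φ s))
    (hden' : ∀ q : Q, ∃ r s : R, RegElem R s ∧ φ s * q = φ r)
    [Module Rᵐᵒᵖ Q] (hr : ∀ (r : R) (q : Q), op r • q = q * φ r)
    (hvi : ∀ (M : Type u) [AddCommGroup M] [Module Rᵐᵒᵖ M], RFlatDimLE1 R M →
      ∀ (N : Type u) [AddCommGroup N] [Module Rᵐᵒᵖ N],
        Subsingleton (extGroup Rᵐᵒᵖ 2 M N)) :
    ∀ (M : Type u) [AddCommGroup M] [Module Rᵐᵒᵖ M],
      Subsingleton (extGroup Rᵐᵒᵖ 1 Q M) →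
      ∀ N : Submodule Rᵐᵒᵖ M, Subsingleton (extGroup Rᵐᵒᵖ 1 Q (M ⧸ N)) := by
  intro M _ _ hM N
  have hφ : IsClassicalLeftQuotientRing φ := ⟨hinj, hunit, hden'⟩
  have hQ : RFlatDimLE1 R Q := rFlatDimLE1_of_isFlatRightModule (hφ.isFlatRightModule hr)
  exact subsingleton_extGroup_one_quotient hM (hvi Q hQ N)

/-- Let `R` be a right and left Ore ring with classical two-sided quotient ring
`Q = R[S⁻¹] = [S⁻¹]R` (`S` the set of regular elements), with `Fdim(Q_Q) = 0`
(every right `Q`-module of finite projective dimension is projective).  If every right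
`R`-module of weak dimension `≤ 1` has projective dimension `≤ 1`, then the class of
Matlis-cotorsion right `R`-modules (`Ext^1_R(Q, -) = 0`) is closed under
homomorphic images. -/
theorem matlisCotorsion_closed_under_quotients {R Q : Type u} [Ring R] [Ring Q]
    (φ : R →+* Q) (hinj : Function.Injective φ)
    (hunit : ∀ s : R, RegElem R s → IsUnit (φ s))
    (hden : ∀ q : Q, ∃ r s : R, RegElem R s ∧ q * φ s = φ r)
    (hden' : ∀ q : Q, ∃ r s : R, RegElem R s ∧ φ s * q = φ r)
    (hFdim : ∀ (M : Type u) [AddCommGroup M] [Module Qᵐᵒᵖ M],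
      (∃ n : ℕ, ∀ (N : Type u) [AddCommGroup N] [Module Qᵐᵒᵖ N],
        Subsingleton (extGroup Qᵐᵒᵖ (n + 1) M N)) → Module.Projective Qᵐᵒᵖ M)
    [Module Rᵐᵒᵖ Q] (hr : ∀ (r : R) (q : Q), op r • q = q * φ r)
    (hvi : ∀ (M : Type u) [AddCommGroup M] [Module Rᵐᵒᵖ M], RFlatDimLE1 R M →
      ∀ (N : Type u) [AddCommGroup N] [Module Rᵐᵒᵖ N],
        Subsingleton (extGroup Rᵐᵒᵖ 2 M N)) :
    ∀ (M : Type u) [AddCommGroup M] [Module Rᵐᵒᵖ M],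
      Subsingleton (extGroup Rᵐᵒᵖ 1 Q M) →
      ∀ N : Submodule Rᵐᵒᵖ M, Subsingleton (extGroup Rᵐᵒᵖ 1 Q (M ⧸ N)) :=
  matlisCotorsion_closed_under_quotients_general φ hinj hunit hden' hr hvi
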